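/- arXiv:math/9904080 — 4 statements merged into one kernel-verified Lean document; each statement's English description precedes it below -/
import Mathlib

section
/- Let A be an n×n complex matrix whose characteristic polynomial factors as ∏_{i=1}^{n} (X − λ_i) with λ_1, …, λ_n ∈ ℂ. Then the determinant of the linear endomorphism Λ_A of the space of symmetric n×n complex matrices equals ∏_{1 ≤ i ≤ j ≤ n} (λ_i + λ_j)/2. -/
open Matrix Polynomial

/-- The submodule of symmetric `n × n` matrices. -/
def symMat (n : ℕ) (𝕜 : Type*) [CommRing 𝕜] : Submodule 𝕜 (Matrix (Fin n) (Fin n) 𝕜) where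
  carrier := {W | Wᵀ = W}
  add_mem' := by
    intro a b ha hb
    simp only [Set.mem_setOf_eq, Matrix.transpose_add] at *
    rw [ha, hb]
  zero_mem' := by simp
  smul_mem' := by
    intro c a ha
    simp only [Set.mem_setOf_eq, Matrix.transpose_smul] at *
    rw [ha]

/-- The operator `Λ_A` on symmetric matrices, `Λ_A W = (Aᵀ W + W A)/2`. -/
def Lam {n : ℕ} {𝕜 : Type*} [Field 𝕜] (A : Matrix (Fin n) (Fin n) 𝕜) :
    symMat n 𝕜 →ₗ[𝕜] symMat n 𝕜 :=
  LinearMap.restrict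
    ((2 : 𝕜)⁻¹ • (LinearMap.mulLeft 𝕜 Aᵀ + LinearMap.mulRight 𝕜 A))
    (fun W hW => by
      have h : Wᵀ = W := hW
      show ((2 : 𝕜)⁻¹ • (Aᵀ * W + W * A))ᵀ = (2 : 𝕜)⁻¹ • (Aᵀ * W + W * A)
      simp [Matrix.transpose_add, Matrix.transpose_mul, h, add_comm])

open Module Finset

/-! Over an algebraically closed field every matrix is similar to a lower triangular one `T`:
the kernel of an eigenvector of the dual map is an invariant hyperplane, and one inducts on the
dimension. Replacing `A` by `P⁻¹AP` conjugates `Λ_A` by the congruence `W ↦ PᵀWP`, so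
`det Λ_A = det Λ_T`. In the basis of symmetric matrix units indexed by unordered pairs `{i, j}`,
`Λ_T` is triangular for the lexicographic order on sorted pairs, with diagonal entries
`(T_ii + T_jj)/2`. The diagonal of `T` is a rearrangement of the `λ_i`, since both are the roots
of the characteristic polynomial, and the product over unordered pairs only sees that multiset. -/

theorem Matrix.BlockTriangular.det_of_injective {m α R : Type*} [Fintype m] [DecidableEq m]
    [CommRing R] [LinearOrder α] {M : Matrix m m R} {b : m → α} (hM : M.BlockTriangular b)
    (hb : Function.Injective b) : M.det = ∏ i, M i i :=
  letI : LinearOrder m := LinearOrder.lift' b hb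
  det_of_isUpperTriangular hM

theorem Sym2.toLex_inf_sup_injective {α : Type*} [LinearOrder α] :
    Function.Injective fun z : Sym2 α => toLex (z.inf, z.sup) := fun _ _ h =>
  Sym2.inf_eq_inf_and_sup_eq_sup.mp (Prod.ext_iff.mp (toLex.injective h))

theorem Sym2.toLex_inf_sup_mk_le {α : Type*} [LinearOrder α] {a b c d : α} (hac : a ≤ c)
    (hbd : b ≤ d) : toLex (s(a, b).inf, s(a, b).sup) ≤ toLex (s(c, d).inf, s(c, d).sup) :=
  Prod.Lex.toLex_mono ⟨inf_le_inf hac hbd, sup_le_sup hac hbd⟩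

theorem Finset.prod_filter_le_eq_prod_sym2 {ι M : Type*} [LinearOrder ι] [Fintype ι]
    [CommMonoid M] (g : Sym2 ι → M) :
    ∏ p ∈ univ.filter (fun p : ι × ι => p.1 ≤ p.2), g s(p.1, p.2) = ∏ z, g z := by
  rw [← prod_subtype_eq_prod_filter, subtype_univ]
  exact Fintype.prod_equiv Sym2.sortEquiv.symm _ _ fun _ => rfl

theorem Finset.prod_sym2_map {ι α M : Type*} [Fintype ι] [CommMonoid M] (u : ι → α)
    (g : Sym2 α → M) : ∏ z : Sym2 ι, g (z.map u) = ((univ.val.map u).sym2.map g).prod := by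
  classical
  rw [prod_eq_multiset_prod, Multiset.sym2_map, Multiset.map_map, ← sym2_val, sym2_univ]
  rfl

theorem Matrix.IsLowerTriangular.charpoly_eq {m R : Type*} [Fintype m] [DecidableEq m]
    [LinearOrder m] [CommRing R] {M : Matrix m m R} (hM : M.IsLowerTriangular) :
    M.charpoly = ∏ i, (X - C (M i i)) := by
  rw [← charpoly_transpose]
  exact charpoly_of_isUpperTriangular _ hM.transpose

theorem Multiset.map_univ_eq_of_prod_X_sub_C_eq {ι R : Type*} [Fintype ι] [CommRing R]
    [IsDomain R] {u v : ι → R} (h : ∏ i, (X - C (u i)) = ∏ i, (X - C (v i))) :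
    univ.val.map u = univ.val.map v := by
  have roots_eq (w : ι → R) : (∏ i, (X - C (w i))).roots = univ.val.map w := by
    rw [prod_eq_multiset_prod, ← roots_multiset_prod_X_sub_C (univ.val.map w),
      Multiset.map_map]
    rfl
  rw [← roots_eq u, ← roots_eq v, h]

theorem Module.Basis.mkFinCons_repr_coe {R M : Type*} [Ring R] [AddCommGroup M] [Module R M]
    {n : ℕ} {N : Submodule R M} (y : M) (b : Basis (Fin n) R N)
    (hli : ∀ (c : R), ∀ x ∈ N, c • y + x = 0 → c = 0) (hsp : ∀ z : M, ∃ c : R, z + c • y ∈ N)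
    (x : N) : ⇑((Basis.mkFinCons y b hli hsp).repr x) = Fin.cons 0 (b.repr x) := by
  have hx : (x : M) = ∑ i, (Fin.cons 0 (b.repr x) : Fin (n + 1) → R) i • mkFinCons y b hli hsp i := by
    rw [Fin.sum_univ_succ, coe_mkFinCons]
    simp only [Fin.cons_zero, zero_smul, zero_add, Fin.cons_succ, Function.comp_apply]
    exact_mod_cast congr_arg Subtype.val (b.sum_repr x).symm
  rw [hx, repr_sum_self]

theorem Module.End.exists_basis_isLowerTriangular {K V : Type*} [Field K] [IsAlgClosed K]
    [AddCommGroup V] [Module K V] [FiniteDimensional K V] {d : ℕ} (hd : finrank K V = d)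
    (f : End K V) : ∃ b : Basis (Fin d) K V, (LinearMap.toMatrix b b f).IsLowerTriangular := by
  induction d generalizing V with
  | zero => exact ⟨finBasisOfFinrankEq K V hd, fun i => i.elim0⟩
  | succ m ih =>
    have : Nontrivial V := Module.nontrivial_of_finrank_eq_succ hd
    obtain ⟨μ, hμ⟩ := End.exists_eigenvalue f.dualMap
    obtain ⟨φ, hφ⟩ := hμ.exists_hasEigenvector
    have hφf (x : V) : φ (f x) = μ * φ x := congr($(hφ.apply_eq_smul) x)
    have hH : ∀ x ∈ LinearMap.ker φ, f x ∈ LinearMap.ker φ := by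
      intro x hx
      rw [LinearMap.mem_ker] at hx ⊢
      rw [hφf, hx, mul_zero]
    obtain ⟨c, hc⟩ := ih (by have := φ.finrank_ker_add_one_of_ne_zero hφ.2; omega) (f.restrict hH)
    obtain ⟨y, hy⟩ : ∃ y, φ y ≠ 0 := by
      by_contra! h
      exact hφ.2 (LinearMap.ext h)
    have hli (a : K) (x : V) (hx : x ∈ LinearMap.ker φ) (h : a • y + x = 0) : a = 0 := by
      rw [LinearMap.mem_ker] at hx
      simpa [hx, hy] using congr(φ $h)
    have hsp (z : V) : ∃ a : K, z + a • y ∈ LinearMap.ker φ :=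
      ⟨-(φ z / φ y), by simp [hy]⟩
    refine ⟨Basis.mkFinCons y c hli hsp, fun i j hij => ?_⟩
    obtain ⟨j, rfl⟩ := Fin.exists_succ_eq.mpr (Fin.ne_zero_of_lt hij)
    have hfc : f (c j) = (f.restrict hH (c j) : V) := rfl
    rw [LinearMap.toMatrix_apply, Basis.coe_mkFinCons, Fin.cons_succ, Function.comp_apply, hfc,
      Basis.mkFinCons_repr_coe]
    cases i using Fin.cases with
    | zero => rfl
    | succ i => simpa [LinearMap.toMatrix_apply] using hc (Fin.succ_lt_succ_iff.mp hij)

theorem Matrix.exists_mul_mul_isLowerTriangular {K : Type*} [Field K] [IsAlgClosed K] {n : ℕ}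
    (A : Matrix (Fin n) (Fin n) K) :
    ∃ P Q : Matrix (Fin n) (Fin n) K, P * Q = 1 ∧ (Q * A * P).IsLowerTriangular := by
  obtain ⟨b, hb⟩ := Module.End.exists_basis_isLowerTriangular (Module.finrank_fin_fun K) (toLin' A)
  refine ⟨(Pi.basisFun K (Fin n)).toMatrix b, b.toMatrix (Pi.basisFun K (Fin n)),
    Basis.toMatrix_mul_toMatrix_flip _ _, ?_⟩
  rwa [← LinearMap.toMatrix'_toLin' A, ← LinearMap.toMatrix_eq_toMatrix',
    basis_toMatrix_mul_linearMap_toMatrix_mul_basis_toMatrix]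

namespace symMat

variable {n : ℕ} {K : Type*} [CommRing K]

variable (n K) in
def equivFunSym2 : symMat n K ≃ₗ[K] (Sym2 (Fin n) → K) where
  toFun W := Sym2.lift ⟨fun i j => (W : Matrix (Fin n) (Fin n) K) i j,
    fun i j => congr_fun₂ W.2 j i⟩
  map_add' W V := by ext z; induction z using Sym2.ind; rfl
  map_smul' c W := by ext z; induction z using Sym2.ind; rfl
  invFun c := ⟨of fun i j => c s(i, j), by ext i j; simp [Sym2.eq_swap]⟩
  left_inv W := rfl
  right_inv c := by ext z; induction z using Sym2.ind; rfl

variable (n K) in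
noncomputable def basis : Basis (Sym2 (Fin n)) K (symMat n K) := Basis.ofEquivFun (equivFunSym2 n K)

theorem basis_repr_mk (W : symMat n K) (i j : Fin n) :
    (basis n K).repr W s(i, j) = (W : Matrix (Fin n) (Fin n) K) i j := rfl

theorem coe_basis_apply (z : Sym2 (Fin n)) (i j : Fin n) :
    (basis n K z : Matrix (Fin n) (Fin n) K) i j = if s(i, j) = z then 1 else 0 := by
  rw [basis, Basis.coe_ofEquivFun]
  exact Pi.single_apply z 1 s(i, j)

def congruence (P : Matrix (Fin n) (Fin n) K) : symMat n K →ₗ[K] symMat n K :=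
  LinearMap.restrict (LinearMap.mulLeft K Pᵀ ∘ₗ LinearMap.mulRight K P) fun W (hW : Wᵀ = W) => by
    change (Pᵀ * (W * P))ᵀ = Pᵀ * (W * P)
    rw [transpose_mul, transpose_mul, hW, transpose_transpose, Matrix.mul_assoc]

theorem coe_congruence (P : Matrix (Fin n) (Fin n) K) (W : symMat n K) :
    (congruence P W : Matrix (Fin n) (Fin n) K) = Pᵀ * W * P :=
  (Matrix.mul_assoc Pᵀ (W : Matrix (Fin n) (Fin n) K) P).symm

theorem congruence_comp (P Q : Matrix (Fin n) (Fin n) K) :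
    congruence Q ∘ₗ congruence P = congruence (P * Q) := by
  ext W : 2
  simp [coe_congruence, transpose_mul, Matrix.mul_assoc]

theorem congruence_one : congruence (1 : Matrix (Fin n) (Fin n) K) = LinearMap.id := by
  ext W : 2
  simp [coe_congruence]

def congruenceEquiv {P Q : Matrix (Fin n) (Fin n) K} (hPQ : P * Q = 1) :
    symMat n K ≃ₗ[K] symMat n K :=
  .ofLinearMap (congruence P) (congruence Q)
    (by rw [congruence_comp, mul_eq_one_comm.mp hPQ, congruence_one])
    (by rw [congruence_comp, hPQ, congruence_one])

end symMat

def pairMean {K : Type*} [Field K] : Sym2 K → K :=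
  Sym2.lift ⟨fun a b => (a + b) / 2, fun a b => congrArg (· / 2) (add_comm a b)⟩

namespace Lam

variable {n : ℕ} {K : Type*} [Field K]

theorem coe_apply (A : Matrix (Fin n) (Fin n) K) (W : symMat n K) :
    (Lam A W : Matrix (Fin n) (Fin n) K) = (2 : K)⁻¹ • (Aᵀ * W + W * A) := rfl

theorem comp_congruence {P Q : Matrix (Fin n) (Fin n) K} (hPQ : P * Q = 1)
    (A : Matrix (Fin n) (Fin n) K) :
    Lam (Q * A * P) ∘ₗ symMat.congruence P = symMat.congruence P ∘ₗ Lam A := by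
  have hQP : Qᵀ * Pᵀ = 1 := by rw [← transpose_mul, hPQ, transpose_one]
  ext W : 2
  simp only [LinearMap.comp_apply, coe_apply, symMat.coe_congruence, transpose_mul,
    Matrix.mul_smul, Matrix.smul_mul, Matrix.mul_add, Matrix.add_mul, Matrix.mul_assoc]
  rw [← Matrix.mul_assoc Qᵀ, hQP, ← Matrix.mul_assoc P Q, hPQ, Matrix.one_mul, Matrix.one_mul]

theorem det_conj {P Q : Matrix (Fin n) (Fin n) K} (hPQ : P * Q = 1)
    (A : Matrix (Fin n) (Fin n) K) : LinearMap.det (Lam (Q * A * P)) = LinearMap.det (Lam A) := by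
  let e := symMat.congruenceEquiv hPQ
  rw [← LinearMap.det_conj (Lam A) e]
  congr 1
  ext W : 1
  have h := LinearMap.congr_fun (comp_congruence hPQ A) (e.symm W)
  rwa [LinearMap.comp_apply, LinearMap.comp_apply, show symMat.congruence P (e.symm W) = W from
    e.apply_symm_apply W] at h

theorem toMatrix_basis_mk (T : Matrix (Fin n) (Fin n) K) (a c : Fin n) (z : Sym2 (Fin n)) :
    LinearMap.toMatrix (symMat.basis n K) (symMat.basis n K) (Lam T) s(a, c) z =
      (2 : K)⁻¹ * (∑ k ∈ univ.filter (fun k => s(k, c) = z), T k a +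
        ∑ k ∈ univ.filter (fun k => s(a, k) = z), T k c) := by
  rw [LinearMap.toMatrix_apply, symMat.basis_repr_mk, coe_apply]
  simp [Matrix.mul_apply, symMat.coe_basis_apply, Finset.sum_filter]

theorem blockTriangular_toMatrix {T : Matrix (Fin n) (Fin n) K} (hT : T.IsLowerTriangular) :
    (LinearMap.toMatrix (symMat.basis n K) (symMat.basis n K) (Lam T)).BlockTriangular
      fun z => toLex (z.inf, z.sup) := by
  intro x z hzx
  induction x using Sym2.ind with | _ a c
  rw [toMatrix_basis_mk]
  have h₁ : ∀ k ∈ univ.filter (fun k => s(k, c) = z), T k a = 0 := by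
    intro k hk
    rw [mem_filter] at hk
    refine hT (lt_of_not_ge fun hak => hzx.not_ge ?_)
    exact hk.2 ▸ Sym2.toLex_inf_sup_mk_le hak le_rfl
  have h₂ : ∀ k ∈ univ.filter (fun k => s(a, k) = z), T k c = 0 := by
    intro k hk
    rw [mem_filter] at hk
    refine hT (lt_of_not_ge fun hck => hzx.not_ge ?_)
    exact hk.2 ▸ Sym2.toLex_inf_sup_mk_le le_rfl hck
  rw [sum_eq_zero h₁, sum_eq_zero h₂, add_zero, mul_zero]

theorem det_of_isLowerTriangular {T : Matrix (Fin n) (Fin n) K} (hT : T.IsLowerTriangular) :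
    LinearMap.det (Lam T) = ∏ z : Sym2 (Fin n), pairMean (z.map T.diag) := by
  rw [← LinearMap.det_toMatrix (symMat.basis n K),
    (blockTriangular_toMatrix hT).det_of_injective Sym2.toLex_inf_sup_injective]
  refine prod_congr rfl fun z _ => ?_
  induction z using Sym2.ind with | _ a c
  rw [toMatrix_basis_mk]
  simp only [Sym2.congr_left, Sym2.congr_right, filter_eq', mem_univ, if_true, sum_singleton,
    Sym2.map_mk, pairMean, Sym2.lift_mk, diag_apply]
  ring

end Lam

/-- If the characteristic polynomial of `A` factors as `∏ (X - λᵢ)`, then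
`det Λ_A = ∏_{i ≤ j} (λᵢ + λⱼ)/2`. -/
theorem det_lam_eq_prod {n : ℕ} (A : Matrix (Fin n) (Fin n) ℂ) (lam : Fin n → ℂ)
    (hA : A.charpoly = ∏ i, (X - C (lam i))) :
    LinearMap.det (Lam A) =
      ∏ p ∈ Finset.univ.filter (fun p : Fin n × Fin n => p.1 ≤ p.2),
        (lam p.1 + lam p.2) / 2 := by
  obtain ⟨P, Q, hPQ, hT⟩ := Matrix.exists_mul_mul_isLowerTriangular A
  have hdiag : univ.val.map (Q * A * P).diag = univ.val.map lam := by
    refine Multiset.map_univ_eq_of_prod_X_sub_C_eq (hT.charpoly_eq.symm.trans ?_)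
    rw [← hA, charpoly_mul_comm, ← Matrix.mul_assoc, hPQ, Matrix.one_mul]
  calc LinearMap.det (Lam A) = LinearMap.det (Lam (Q * A * P)) := (Lam.det_conj hPQ A).symm
    _ = ∏ z : Sym2 (Fin n), pairMean (z.map (Q * A * P).diag) := Lam.det_of_isLowerTriangular hT
    _ = ∏ z : Sym2 (Fin n), pairMean (z.map lam) := by rw [prod_sym2_map, prod_sym2_map, hdiag]
    _ = _ := (prod_filter_le_eq_prod_sym2 _).symm
end

section
/- Let A be an n×n complex matrix whose characteristic polynomial factors as ∏_{i=1}^{n} (X − λ_i) with λ_1, …, λ_n ∈ ℂ, and let Λ_A be the induced linear endomorphism of the space of symmetric n×n complex matrices. Then for every μ ∈ ℂ, ( det(Λ_A − μ·Id) )² = det(A − μ·I) · ∏_{i=1}^{n} ∏_{j=1}^{n} ( (λ_i + λ_j)/2 − μ ). -/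
open Matrix Polynomial

open Module


lemma exists_lower_tri_basis : ∀ (n : ℕ) (V : Type) [AddCommGroup V] [Module ℂ V]
    [FiniteDimensional ℂ V] (_ : Module.finrank ℂ V = n) (f : V →ₗ[ℂ] V),
    ∃ b : Basis (Fin n) ℂ V, ∀ i j : Fin n, i < j → (LinearMap.toMatrix b b f) i j = 0 := by
  intro n
  induction n with
  | zero =>
    intro V _ _ _ hdim f
    exact ⟨(Module.finBasis ℂ V).reindex (finCongr hdim), fun i => i.elim0⟩
  | succ n IH =>
    intro V _ _ _ hdim f
    have : Nontrivial V := by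
      apply Module.nontrivial_of_finrank_pos (R := ℂ)
      omega
    -- eigenvector of the dual map
    obtain ⟨lam, hlam⟩ := Module.End.exists_eigenvalue (f.dualMap)
    obtain ⟨φ, hφ⟩ := hlam.exists_hasEigenvector
    have hφ0 : φ ≠ 0 := hφ.right
    have hφeig : ∀ x : V, φ (f x) = lam * φ x := by
      intro x
      have := hφ.apply_eq_smul
      have : f.dualMap φ = lam • φ := this
      calc φ (f x) = (f.dualMap φ) x := rfl
        _ = (lam • φ) x := by rw [this]
        _ = lam * φ x := rfl
    obtain ⟨y₀, hy₀⟩ : ∃ y, φ y ≠ 0 := by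
      by_contra h
      push_neg at h
      exact hφ0 (LinearMap.ext fun x => h x)
    set y : V := (φ y₀)⁻¹ • y₀ with hy
    have hφy : φ y = 1 := by
      rw [hy]
      rw [φ.map_smul, smul_eq_mul, inv_mul_cancel₀ hy₀]
    set W : Submodule ℂ V := LinearMap.ker φ with hW
    have hinv : ∀ x ∈ W, f x ∈ W := by
      intro x hx
      have hx' : φ x = 0 := hx
      simp only [hW, LinearMap.mem_ker, hφeig, hx', mul_zero]
    have hWrank : Module.finrank ℂ W = n := by
      have h1 := LinearMap.finrank_range_add_finrank_ker φ
      have hsurj : LinearMap.range φ = ⊤ := by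
        rw [LinearMap.range_eq_top]
        intro z
        exact ⟨(z / φ y₀) • y₀, by simp [div_mul_cancel₀, hy₀]⟩
      rw [hsurj] at h1
      rw [← hW] at h1
      simp only [finrank_top, Module.finrank_self, hdim] at h1
      omega
    set g : W →ₗ[ℂ] W := f.restrict hinv with hg
    obtain ⟨c, hc⟩ := IH W hWrank g
    have hli : ∀ (a : ℂ), ∀ x ∈ W, a • y + x = 0 → a = 0 := by
      intro a x hx h
      have := congrArg φ h
      have hx' : φ x = 0 := hx
      simpa [hφy, hx'] using this
    have hsp : ∀ z : V, ∃ a : ℂ, z + a • y ∈ W := by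
      intro z
      refine ⟨-φ z, ?_⟩
      simp [hW, LinearMap.mem_ker, hφy]
    set b := Basis.mkFinCons y c hli hsp with hb
    have hbcoe : ∀ k : Fin n, b k.succ = (c k : V) := by
      intro k
      rw [hb, Basis.coe_mkFinCons]
      simp
    -- repr of elements of W
    have hrepr : ∀ (w : W) (i : Fin (n+1)), b.repr (w : V) i =
        Fin.cases 0 (fun i' => c.repr w i') i := by
      intro w i
      have hw : (w : V) = ∑ k : Fin n, c.repr w k • b k.succ := by
        simp_rw [hbcoe]
        calc (w : V) = ((∑ k, c.repr w k • c k : W) : V) := by rw [c.sum_repr w]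
          _ = ∑ k : Fin n, c.repr w k • (c k : V) := by push_cast [Submodule.coe_sum]; rfl
      rw [hw]
      simp only [map_sum, _root_.map_smul, Finsupp.coe_finset_sum, Finsupp.coe_smul, Finset.sum_apply,
        Pi.smul_apply, Basis.repr_self]
      induction i using Fin.cases with
      | zero =>
        simp [Finsupp.single_apply, Fin.succ_ne_zero]
      | succ i' =>
        simp [Finsupp.single_apply, Fin.succ_inj]
    refine ⟨b, ?_⟩
    intro i j hij
    rw [LinearMap.toMatrix_apply]
    induction j using Fin.cases with
    | zero => exact absurd hij (by simp)
    | succ j' =>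
      have hfb : f (b j'.succ) = ((g (c j') : W) : V) := by
        rw [hbcoe]
        rfl
      rw [hfb, hrepr]
      induction i using Fin.cases with
      | zero => rfl
      | succ i' =>
        have : i' < j' := by
          simpa [Fin.succ_lt_succ_iff] using hij
        have := hc i' j' this
        rw [LinearMap.toMatrix_apply] at this
        simpa using this




lemma exists_similar_lower_tri {n : ℕ} (A : Matrix (Fin n) (Fin n) ℂ) :
    ∃ P Q B : Matrix (Fin n) (Fin n) ℂ, P * Q = 1 ∧ Q * P = 1 ∧ B = Q * A * P ∧
      (∀ i j : Fin n, i < j → B i j = 0) ∧ A.charpoly = B.charpoly := by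
  set std := Pi.basisFun ℂ (Fin n) with hstd
  set f := Matrix.toLin std std A with hf
  obtain ⟨b, hb⟩ := exists_lower_tri_basis n (Fin n → ℂ)
    (by simp [Module.finrank_pi]) f
  refine ⟨std.toMatrix ⇑b, b.toMatrix ⇑std, LinearMap.toMatrix b b f,
    Basis.toMatrix_mul_toMatrix_flip _ _, Basis.toMatrix_mul_toMatrix_flip _ _, ?_, hb, ?_⟩
  · rw [show A = LinearMap.toMatrix std std f from (LinearMap.toMatrix_toLin std std A).symm]
    rw [basis_toMatrix_mul_linearMap_toMatrix_mul_basis_toMatrix]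
  · rw [show A = LinearMap.toMatrix std std f from (LinearMap.toMatrix_toLin std std A).symm]
    rw [LinearMap.charpoly_toMatrix, LinearMap.charpoly_toMatrix]

abbrev SymIdx (n : ℕ) := {p : Fin n × Fin n // p.1 ≤ p.2}

section SymBasis
variable {n : ℕ}

def symToFun : symMat n ℂ →ₗ[ℂ] (SymIdx n → ℂ) where
  toFun W p := (W : Matrix (Fin n) (Fin n) ℂ) p.1.1 p.1.2
  map_add' _ _ := rfl
  map_smul' _ _ := rfl

def funToSymMat (c : SymIdx n → ℂ) : Matrix (Fin n) (Fin n) ℂ :=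
  Matrix.of fun i j => if h : i ≤ j then c ⟨(i, j), h⟩ else c ⟨(j, i), (not_le.mp h).le⟩

lemma funToSymMat_symm (c : SymIdx n → ℂ) : (funToSymMat c)ᵀ = funToSymMat c := by
  ext i j
  simp only [transpose_apply, funToSymMat, of_apply]
  by_cases h1 : i ≤ j <;> by_cases h2 : j ≤ i
  · obtain rfl : i = j := le_antisymm h1 h2
    rfl
  · rw [dif_neg h2, dif_pos h1]
  · rw [dif_pos h2, dif_neg h1]
  · exact absurd (le_of_not_ge h1) h2

def funToSym : (SymIdx n → ℂ) →ₗ[ℂ] symMat n ℂ where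
  toFun c := ⟨funToSymMat c, funToSymMat_symm c⟩
  map_add' a b := Subtype.ext (by
    ext i j
    by_cases h : i ≤ j <;> simp [funToSymMat, h])
  map_smul' a b := Subtype.ext (by
    ext i j
    by_cases h : i ≤ j <;> simp [funToSymMat, h])

noncomputable def symEquiv : symMat n ℂ ≃ₗ[ℂ] (SymIdx n → ℂ) :=
  LinearEquiv.ofLinear symToFun funToSym
    (by
      ext c p
      obtain ⟨⟨p1, p2⟩, hp⟩ := p
      simp [(show ∀ (W : symMat n ℂ) (p : SymIdx n), symToFun W p = (W : Matrix (Fin n) (Fin n) ℂ) p.1.1 p.1.2 from fun _ _ => rfl), funToSym, funToSymMat, hp])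
    (by
      ext W : 1
      apply Subtype.ext
      ext i j
      by_cases h : i ≤ j
      · simp [(show ∀ (W : symMat n ℂ) (p : SymIdx n), symToFun W p = (W : Matrix (Fin n) (Fin n) ℂ) p.1.1 p.1.2 from fun _ _ => rfl), funToSym, funToSymMat, h]
      · have hsym : (W : Matrix (Fin n) (Fin n) ℂ) j i = (W : Matrix (Fin n) (Fin n) ℂ) i j :=
          congrFun (congrFun W.2 i) j
        simp [(show ∀ (W : symMat n ℂ) (p : SymIdx n), symToFun W p = (W : Matrix (Fin n) (Fin n) ℂ) p.1.1 p.1.2 from fun _ _ => rfl), funToSym, funToSymMat, h, hsym])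

noncomputable def symBasis : Basis (SymIdx n) ℂ (symMat n ℂ) := Basis.ofEquivFun symEquiv

lemma symBasis_repr (x : symMat n ℂ) (q : SymIdx n) :
    (symBasis (n := n)).repr x q = (x : Matrix (Fin n) (Fin n) ℂ) q.1.1 q.1.2 :=
  Basis.ofEquivFun_repr_apply _ x q

lemma symBasis_entry (p : SymIdx n) (i j : Fin n) :
    ((symBasis p : symMat n ℂ) : Matrix (Fin n) (Fin n) ℂ) i j
      = if (i = p.1.1 ∧ j = p.1.2) ∨ (i = p.1.2 ∧ j = p.1.1) then 1 else 0 := by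
  obtain ⟨⟨p1, p2⟩, hp⟩ := p
  have hval : ((symBasis ⟨(p1, p2), hp⟩ : symMat n ℂ) : Matrix (Fin n) (Fin n) ℂ)
      = funToSymMat (Function.update 0 ⟨(p1, p2), hp⟩ 1) := by
    rw [symBasis, Basis.coe_ofEquivFun]
    rfl
  rw [hval]
  simp only [funToSymMat, of_apply]
  by_cases h : i ≤ j
  · rw [dif_pos h, Function.update_apply]
    simp only [Pi.zero_apply]
    refine if_congr ?_ rfl rfl
    simp only [Subtype.mk.injEq, Prod.mk.injEq]
    constructor
    · tauto
    · rintro (⟨rfl, rfl⟩ | ⟨rfl, rfl⟩)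
      · exact ⟨rfl, rfl⟩
      · exact ⟨le_antisymm h hp, le_antisymm hp h⟩
  · rw [dif_neg h, Function.update_apply]
    simp only [Pi.zero_apply]
    refine if_congr ?_ rfl rfl
    simp only [Subtype.mk.injEq, Prod.mk.injEq]
    constructor
    · rintro ⟨rfl, rfl⟩
      right; exact ⟨rfl, rfl⟩
    · rintro (⟨rfl, rfl⟩ | ⟨rfl, rfl⟩)
      · exact absurd hp h
      · exact ⟨rfl, rfl⟩

lemma symBasis_entry_sorted (p q : SymIdx n) :
    ((symBasis p : symMat n ℂ) : Matrix (Fin n) (Fin n) ℂ) q.1.1 q.1.2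
      = if q = p then 1 else 0 := by
  rw [← symBasis_repr, Basis.repr_self, Finsupp.single_apply]
  by_cases h : q = p
  · simp [h]
  · rw [if_neg (fun hh => h hh.symm), if_neg h]

lemma toMatrix_lam_apply (B : Matrix (Fin n) (Fin n) ℂ) (μ : ℂ) (q p : SymIdx n) :
    LinearMap.toMatrix symBasis symBasis (Lam B - μ • LinearMap.id) q p =
      2⁻¹ * ((∑ k, B k q.1.1 * ((symBasis p : symMat n ℂ) : Matrix (Fin n) (Fin n) ℂ) k q.1.2)
        + (∑ k, ((symBasis p : symMat n ℂ) : Matrix (Fin n) (Fin n) ℂ) q.1.1 k * B k q.1.2))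
        - (if q = p then μ else 0) := by
  rw [LinearMap.toMatrix_apply, LinearMap.sub_apply, LinearMap.smul_apply, LinearMap.id_apply,
    symBasis_repr]
  simp only [Submodule.coe_sub, Submodule.coe_smul, Matrix.sub_apply, Matrix.smul_apply,
    smul_eq_mul]
  have hval : ((Lam B (symBasis p) : symMat n ℂ) : Matrix (Fin n) (Fin n) ℂ)
      = (2 : ℂ)⁻¹ • (Bᵀ * ((symBasis p : symMat n ℂ) : Matrix (Fin n) (Fin n) ℂ)
        + ((symBasis p : symMat n ℂ) : Matrix (Fin n) (Fin n) ℂ) * B) := by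
    rw [Lam, LinearMap.restrict_coe_apply]
    rfl
  have h2 : μ * ((symBasis p : symMat n ℂ) : Matrix (Fin n) (Fin n) ℂ) q.1.1 q.1.2
      = if q = p then μ else 0 := by
    rw [symBasis_entry_sorted]
    by_cases h : q = p <;> simp [h]
  rw [hval, h2]
  simp only [Matrix.smul_apply, Matrix.add_apply, mul_apply, transpose_apply, smul_eq_mul]
end SymBasis

section Det
variable {n : ℕ}

lemma det_of_blockTriangular_injective {m α R : Type*} [CommRing R] [DecidableEq m] [Fintype m]
    [LinearOrder α] (M : Matrix m m R) (b : m → α) (hinj : Function.Injective b)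
    (h : M.BlockTriangular b) : M.det = ∏ i, M i i := by
  letI : LinearOrder m := LinearOrder.lift' b hinj
  exact Matrix.det_of_upperTriangular (fun i j hij => h hij)

lemma symIdx_inj :
    Function.Injective
      (fun p : SymIdx n => toLex ((p : Fin n × Fin n).2, (p : Fin n × Fin n).1)) := by
  intro p q h
  have h' : ((p : Fin n × Fin n).2, (p : Fin n × Fin n).1)
      = ((q : Fin n × Fin n).2, (q : Fin n × Fin n).1) := congrArg ofLex h
  rw [Prod.mk.injEq] at h'
  exact Subtype.ext (Prod.ext h'.2 h'.1)

lemma det_lam_lower (B : Matrix (Fin n) (Fin n) ℂ) (hB : ∀ i j : Fin n, i < j → B i j = 0)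
    (μ : ℂ) :
    LinearMap.det (Lam B - μ • LinearMap.id) =
      ∏ p : SymIdx n, (2⁻¹ * (B (p : Fin n × Fin n).1 (p : Fin n × Fin n).1
        + B (p : Fin n × Fin n).2 (p : Fin n × Fin n).2) - μ) := by
  rw [← LinearMap.det_toMatrix symBasis]
  have htri : (LinearMap.toMatrix symBasis symBasis (Lam B - μ • LinearMap.id)).BlockTriangular
      (fun p : SymIdx n => toLex ((p : Fin n × Fin n).2, (p : Fin n × Fin n).1)) := by
    intro q p hqp
    rw [Prod.Lex.lt_iff] at hqp
    obtain ⟨⟨p1, p2⟩, hp⟩ := p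
    obtain ⟨⟨q1, q2⟩, hq⟩ := q
    simp only at hqp hp hq
    rw [toMatrix_lam_apply]
    have hne : (⟨(q1, q2), hq⟩ : SymIdx n) ≠ ⟨(p1, p2), hp⟩ := by
      intro h
      rw [Subtype.mk.injEq, Prod.mk.injEq] at h
      obtain ⟨rfl, rfl⟩ := h
      rcases hqp with h | ⟨_, h⟩ <;> exact lt_irrefl _ h
    rw [if_neg hne]
    have hsum1 : (∑ k, B k q1 *
        ((symBasis ⟨(p1, p2), hp⟩ : symMat n ℂ) : Matrix (Fin n) (Fin n) ℂ) k q2) = 0 := by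
      apply Finset.sum_eq_zero
      intro k _
      rw [symBasis_entry]
      simp only
      by_cases hc : (k = p1 ∧ q2 = p2) ∨ (k = p2 ∧ q2 = p1)
      · rw [if_pos hc, mul_one]
        apply hB
        rcases hc with ⟨h1, h2⟩ | ⟨h1, h2⟩ <;> rcases hqp with hlt2 | ⟨heq, hlt2⟩
        · rw [h2] at hlt2; exact absurd hlt2 (lt_irrefl _)
        · rw [h1]; exact hlt2
        · rw [h2] at hlt2; exact absurd (hlt2.trans_le hp) (lt_irrefl _)
        · rw [h1, show p2 = q2 from heq, h2]; exact hlt2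
      · rw [if_neg hc, mul_zero]
    have hsum2 : (∑ k,
        ((symBasis ⟨(p1, p2), hp⟩ : symMat n ℂ) : Matrix (Fin n) (Fin n) ℂ) q1 k * B k q2) = 0 := by
      apply Finset.sum_eq_zero
      intro k _
      rw [symBasis_entry]
      simp only
      by_cases hc : (q1 = p1 ∧ k = p2) ∨ (q1 = p2 ∧ k = p1)
      · rw [if_pos hc, one_mul]
        apply hB
        rcases hc with ⟨h1, h2⟩ | ⟨h1, h2⟩ <;> rcases hqp with hlt2 | ⟨heq, hlt2⟩
        · rw [h2]; exact hlt2
        · rw [h1] at hlt2; exact absurd hlt2 (lt_irrefl _)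
        · rw [h2]; exact lt_of_le_of_lt hp hlt2
        · rw [h2]; exact hlt2.trans_le (le_of_eq (h1.trans heq))
      · rw [if_neg hc, zero_mul]
    rw [hsum1, hsum2]
    ring
  rw [det_of_blockTriangular_injective _ _ symIdx_inj htri]
  apply Finset.prod_congr rfl
  intro p _
  obtain ⟨⟨p1, p2⟩, hp⟩ := p
  rw [toMatrix_lam_apply, if_pos rfl]
  simp only
  have hs1 : (∑ k, B k p1 *
      ((symBasis ⟨(p1, p2), hp⟩ : symMat n ℂ) : Matrix (Fin n) (Fin n) ℂ) k p2) = B p1 p1 := by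
    rw [Finset.sum_eq_single p1]
    · rw [symBasis_entry]
      simp only
      simp
    · intro k _ hk
      rw [symBasis_entry]
      simp only
      rw [if_neg, mul_zero]
      rintro (⟨h1, _⟩ | ⟨h1, h2⟩)
      · exact hk h1
      · exact hk (h1.trans h2)
    · intro h
      exact absurd (Finset.mem_univ p1) h
  have hs2 : (∑ k,
      ((symBasis ⟨(p1, p2), hp⟩ : symMat n ℂ) : Matrix (Fin n) (Fin n) ℂ) p1 k * B k p2)
      = B p2 p2 := by
    rw [Finset.sum_eq_single p2]
    · rw [symBasis_entry]
      simp only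
      simp
    · intro k _ hk
      rw [symBasis_entry]
      simp only
      rw [if_neg, zero_mul]
      rintro (⟨_, h2⟩ | ⟨h1, h2⟩)
      · exact hk h2
      · exact hk (h2.trans h1)
    · intro h
      exact absurd (Finset.mem_univ p2) h
  rw [hs1, hs2]
end Det

section Conj
variable {n : ℕ}

noncomputable def cong (P : Matrix (Fin n) (Fin n) ℂ) : symMat n ℂ →ₗ[ℂ] symMat n ℂ :=
  LinearMap.restrict ((LinearMap.mulRight ℂ P).comp (LinearMap.mulLeft ℂ Pᵀ))
    (fun W hW => by
      have h : Wᵀ = W := hW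
      show (Pᵀ * W * P)ᵀ = Pᵀ * W * P
      simp [Matrix.transpose_mul, Matrix.mul_assoc, h])

lemma cong_coe (P : Matrix (Fin n) (Fin n) ℂ) (W : symMat n ℂ) :
    ((cong P W : symMat n ℂ) : Matrix (Fin n) (Fin n) ℂ) = Pᵀ * W * P := by
  rw [cong, LinearMap.restrict_coe_apply]
  rfl

lemma det_lam_conj (A P Q : Matrix (Fin n) (Fin n) ℂ) (hPQ : P * Q = 1) (hQP : Q * P = 1)
    (μ : ℂ) :
    LinearMap.det (Lam A - μ • LinearMap.id) =
      LinearMap.det (Lam (Q * A * P) - μ • LinearMap.id) := by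
  have hQPt : Qᵀ * Pᵀ = 1 := by rw [← Matrix.transpose_mul, hPQ, Matrix.transpose_one]
  have hPQt : Pᵀ * Qᵀ = 1 := by rw [← Matrix.transpose_mul, hQP, Matrix.transpose_one]
  have e1 : ∀ X : Matrix (Fin n) (Fin n) ℂ, Qᵀ * (Pᵀ * X) = X := fun X => by
    rw [← Matrix.mul_assoc, hQPt, Matrix.one_mul]
  have e1' : ∀ X : Matrix (Fin n) (Fin n) ℂ, Pᵀ * (Qᵀ * X) = X := fun X => by
    rw [← Matrix.mul_assoc, hPQt, Matrix.one_mul]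
  have e2 : ∀ X : Matrix (Fin n) (Fin n) ℂ, X * Q * P = X := fun X => by
    rw [Matrix.mul_assoc, hQP, Matrix.mul_one]
  have e2' : ∀ X : Matrix (Fin n) (Fin n) ℂ, X * P * Q = X := fun X => by
    rw [Matrix.mul_assoc, hPQ, Matrix.mul_one]
  have e3 : ∀ X : Matrix (Fin n) (Fin n) ℂ, P * (Q * X) = X := fun X => by
    rw [← Matrix.mul_assoc, hPQ, Matrix.one_mul]
  have hcomp : cong (n := n) P ∘ₗ cong Q = LinearMap.id := by
    apply LinearMap.ext
    intro W
    apply Subtype.ext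
    rw [LinearMap.comp_apply, cong_coe, cong_coe, LinearMap.id_apply]
    calc Pᵀ * (Qᵀ * (W : Matrix (Fin n) (Fin n) ℂ) * Q) * P
        = Pᵀ * (Qᵀ * (W : Matrix (Fin n) (Fin n) ℂ)) * (Q * P) := by
          simp only [Matrix.mul_assoc]
      _ = (W : Matrix (Fin n) (Fin n) ℂ) := by rw [hQP, Matrix.mul_one, e1']
  have hcomp' : cong (n := n) Q ∘ₗ cong P = LinearMap.id := by
    apply LinearMap.ext
    intro W
    apply Subtype.ext
    rw [LinearMap.comp_apply, cong_coe, cong_coe, LinearMap.id_apply]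
    calc Qᵀ * (Pᵀ * (W : Matrix (Fin n) (Fin n) ℂ) * P) * Q
        = Qᵀ * (Pᵀ * (W : Matrix (Fin n) (Fin n) ℂ)) * (P * Q) := by
          simp only [Matrix.mul_assoc]
      _ = (W : Matrix (Fin n) (Fin n) ℂ) := by rw [hPQ, Matrix.mul_one, e1]
  set Φ : symMat n ℂ ≃ₗ[ℂ] symMat n ℂ := LinearEquiv.ofLinear (cong P) (cong Q) hcomp hcomp'
    with hΦ
  have hcomm : cong (n := n) P ∘ₗ Lam A = Lam (Q * A * P) ∘ₗ cong P := by
    apply LinearMap.ext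
    intro W
    apply Subtype.ext
    rw [LinearMap.comp_apply, LinearMap.comp_apply, cong_coe]
    have hl : ((Lam A W : symMat n ℂ) : Matrix (Fin n) (Fin n) ℂ)
        = (2 : ℂ)⁻¹ • (Aᵀ * W + (W : Matrix (Fin n) (Fin n) ℂ) * A) := by
      rw [Lam, LinearMap.restrict_coe_apply]; rfl
    have hr : ((Lam (Q * A * P) (cong P W) : symMat n ℂ) : Matrix (Fin n) (Fin n) ℂ)
        = (2 : ℂ)⁻¹ • ((Q * A * P)ᵀ * ((cong P W : symMat n ℂ) : Matrix (Fin n) (Fin n) ℂ)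
          + ((cong P W : symMat n ℂ) : Matrix (Fin n) (Fin n) ℂ) * (Q * A * P)) := by
      rw [Lam, LinearMap.restrict_coe_apply]; rfl
    rw [hl, hr, cong_coe]
    rw [Matrix.mul_smul, Matrix.smul_mul]
    congr 1
    rw [Matrix.mul_add, Matrix.add_mul]
    congr 1
    · simp only [Matrix.transpose_mul, Matrix.mul_assoc, e1]
    · simp only [Matrix.mul_assoc, e3]
  have key : Lam A - μ • LinearMap.id =
      (Φ.symm : symMat n ℂ →ₗ[ℂ] symMat n ℂ) ∘ₗ (Lam (Q * A * P) - μ • LinearMap.id)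
        ∘ₗ (Φ : symMat n ℂ →ₗ[ℂ] symMat n ℂ) := by
    have hΦc : (Φ : symMat n ℂ →ₗ[ℂ] symMat n ℂ) = cong P := rfl
    have hΦs : (Φ.symm : symMat n ℂ →ₗ[ℂ] symMat n ℂ) = cong Q := rfl
    rw [hΦc, hΦs, LinearMap.sub_comp, LinearMap.comp_sub, ← hcomm,
      ← LinearMap.comp_assoc, hcomp', LinearMap.id_comp,
      LinearMap.smul_comp, LinearMap.id_comp, LinearMap.comp_smul, hcomp']
  have hdc := LinearMap.det_conj (Lam (Q * A * P) - μ • LinearMap.id) Φ.symm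
  simp only [LinearEquiv.symm_symm] at hdc
  rw [key, hdc]
end Conj

section Comb
variable {n : ℕ}

lemma sq_prod_sym {M : Type*} [CommMonoid M] (t : Fin n → Fin n → M)
    (hsym : ∀ i j, t i j = t j i) :
    (∏ p : SymIdx n, t (p : Fin n × Fin n).1 (p : Fin n × Fin n).2) ^ 2 =
      (∏ i, ∏ j, t i j) * ∏ i, t i i := by
  classical
  have h0 : (∏ p : SymIdx n, t (p : Fin n × Fin n).1 (p : Fin n × Fin n).2)
      = ∏ p ∈ Finset.univ.filter (fun p : Fin n × Fin n => p.1 ≤ p.2), t p.1 p.2 :=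
    (Finset.prod_subtype (Finset.univ.filter (fun p : Fin n × Fin n => p.1 ≤ p.2))
      (by simp) (fun p => t p.1 p.2)).symm
  have huniv : (∏ i, ∏ j, t i j) = ∏ p : Fin n × Fin n, t p.1 p.2 := by
    rw [← Finset.univ_product_univ, Finset.prod_product']
  have hsplit : (∏ p : Fin n × Fin n, t p.1 p.2)
      = (∏ p ∈ Finset.univ.filter (fun p : Fin n × Fin n => p.1 ≤ p.2), t p.1 p.2)
        * (∏ p ∈ Finset.univ.filter (fun p : Fin n × Fin n => ¬ p.1 ≤ p.2), t p.1 p.2) :=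
    (Finset.prod_filter_mul_prod_filter_not _ _ _).symm
  have hswap : (∏ p ∈ Finset.univ.filter (fun p : Fin n × Fin n => ¬ p.1 ≤ p.2), t p.1 p.2)
      = ∏ p ∈ Finset.univ.filter (fun p : Fin n × Fin n => p.1 < p.2), t p.1 p.2 := by
    apply Finset.prod_nbij' (fun p : Fin n × Fin n => (p.2, p.1))
      (fun p : Fin n × Fin n => (p.2, p.1))
    · intro a ha
      simp only [Finset.mem_filter, Finset.mem_univ, true_and, not_le] at ha ⊢
      exact ha
    · intro a ha
      simp only [Finset.mem_filter, Finset.mem_univ, true_and, not_le] at ha ⊢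
      exact ha
    · intro a _; rfl
    · intro a _; rfl
    · intro a _; exact hsym a.1 a.2
  have hle : (∏ p ∈ Finset.univ.filter (fun p : Fin n × Fin n => p.1 ≤ p.2), t p.1 p.2)
      = (∏ p ∈ Finset.univ.filter (fun p : Fin n × Fin n => p.1 < p.2), t p.1 p.2)
        * (∏ p ∈ Finset.univ.filter (fun p : Fin n × Fin n => p.1 = p.2), t p.1 p.2) := by
    rw [← Finset.prod_filter_mul_prod_filter_not
      (Finset.univ.filter (fun p : Fin n × Fin n => p.1 ≤ p.2))
      (fun p : Fin n × Fin n => p.1 = p.2), mul_comm]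
    congr 1
    · rw [Finset.filter_filter]
      apply Finset.prod_congr _ (fun _ _ => rfl)
      apply Finset.filter_congr
      intro p _
      exact ⟨fun h => lt_of_le_of_ne h.1 h.2, fun h => ⟨h.le, h.ne⟩⟩
    · rw [Finset.filter_filter]
      apply Finset.prod_congr _ (fun _ _ => rfl)
      apply Finset.filter_congr
      intro p _
      constructor
      · rintro ⟨_, h⟩; exact h
      · intro h; exact ⟨le_of_eq h, h⟩
  have hdiag : (∏ p ∈ Finset.univ.filter (fun p : Fin n × Fin n => p.1 = p.2), t p.1 p.2)
      = ∏ i, t i i := by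
    apply Finset.prod_nbij' (fun p : Fin n × Fin n => p.1) (fun i : Fin n => (i, i))
    · intro a _; exact Finset.mem_univ _
    · intro a _
      simp
    · intro a ha
      simp only [Finset.mem_filter, Finset.mem_univ, true_and] at ha
      exact Prod.ext rfl ha
    · intro a _; rfl
    · intro a ha
      simp only [Finset.mem_filter, Finset.mem_univ, true_and] at ha
      rw [← ha]
  rw [h0, huniv, hsplit, hswap, hle, hdiag, pow_two]
  exact (mul_assoc _ _ _).symm
end Comb

section Final
variable {n : ℕ}

lemma charpoly_lower (B : Matrix (Fin n) (Fin n) ℂ) (hB : ∀ i j : Fin n, i < j → B i j = 0) :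
    B.charpoly = ∏ i, (X - C (B i i)) := by
  have htri : (charmatrix B).BlockTriangular (OrderDual.toDual : Fin n → (Fin n)ᵒᵈ) := by
    rw [Matrix.charmatrix_blockTriangular_iff]
    intro i j hij
    exact hB i j hij
  have : B.charpoly = (charmatrix B).det := rfl
  rw [this, det_of_blockTriangular_injective _ _ OrderDual.toDual.injective htri]
  exact Finset.prod_congr rfl (fun i _ => charmatrix_apply_eq _ _)

lemma prod_prod_multiset (v : Fin n → ℂ) (μ : ℂ) :
    ∏ i, ∏ j, ((v i + v j) / 2 - μ)
      = ((Finset.univ.val.map v).map (fun a =>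
          ((Finset.univ.val.map v).map (fun b => (a + b) / 2 - μ)).prod)).prod := by
  calc ∏ i, ∏ j, ((v i + v j) / 2 - μ)
      = ∏ i, ((Finset.univ.val.map v).map (fun b => (v i + b) / 2 - μ)).prod := by
        apply Finset.prod_congr rfl
        intro i _
        rw [Finset.prod_eq_multiset_prod, Multiset.map_map]
        rfl
    _ = _ := by
        rw [Finset.prod_eq_multiset_prod, Multiset.map_map]
        rfl

lemma prod_sub_multiset (v : Fin n → ℂ) (μ : ℂ) :
    ∏ i, (v i - μ) = ((Finset.univ.val.map v).map (fun a => a - μ)).prod := by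
  rw [Finset.prod_eq_multiset_prod, Multiset.map_map]
  rfl

theorem det_lam_sub_smul_id_sq' {n : ℕ} (A : Matrix (Fin n) (Fin n) ℂ) (lam : Fin n → ℂ)
    (hA : A.charpoly = ∏ i, (X - C (lam i))) (μ : ℂ) :
    (LinearMap.det (Lam A - μ • LinearMap.id)) ^ 2 =
      (A - μ • (1 : Matrix (Fin n) (Fin n) ℂ)).det *
        ∏ i, ∏ j, ((lam i + lam j) / 2 - μ) := by
  obtain ⟨P, Q, B, hPQ, hQP, hB, hBtri, hcp⟩ := exists_similar_lower_tri A
  set d : Fin n → ℂ := fun i => B i i with hd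
  have hpoly : ∏ i, (X - C (lam i)) = ∏ i, (X - C (d i)) := by
    rw [← hA, hcp, charpoly_lower B hBtri]
  have hmult : Finset.univ.val.map lam = Finset.univ.val.map d := by
    have h1 : ((Finset.univ.val.map lam).map (fun a => X - C a)).prod
        = ((Finset.univ.val.map d).map (fun a => X - C a)).prod := by
      simp only [Multiset.map_map]
      rw [← Finset.prod_eq_multiset_prod, ← Finset.prod_eq_multiset_prod]
      simpa [Function.comp] using hpoly
    calc Finset.univ.val.map lam
        = (((Finset.univ.val.map lam).map (fun a => X - C a)).prod).roots :=
          (roots_multiset_prod_X_sub_C _).symm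
      _ = (((Finset.univ.val.map d).map (fun a => X - C a)).prod).roots := by rw [h1]
      _ = Finset.univ.val.map d := roots_multiset_prod_X_sub_C _
  have hdetB : (B - μ • (1 : Matrix (Fin n) (Fin n) ℂ)).det = ∏ i, (d i - μ) := by
    have htri : (B - μ • (1 : Matrix (Fin n) (Fin n) ℂ)).BlockTriangular
        (OrderDual.toDual : Fin n → (Fin n)ᵒᵈ) := by
      intro i j hij
      have hij' : (i : Fin n) < j := hij
      rw [Matrix.sub_apply, Matrix.smul_apply, Matrix.one_apply_ne hij'.ne, hBtri i j hij']
      simp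
    rw [det_of_blockTriangular_injective _ _ OrderDual.toDual.injective htri]
    apply Finset.prod_congr rfl
    intro i _
    rw [Matrix.sub_apply, Matrix.smul_apply, Matrix.one_apply_eq]
    simp [hd]
  have hdetA : (A - μ • (1 : Matrix (Fin n) (Fin n) ℂ)).det = ∏ i, (d i - μ) := by
    have hBA : B - μ • (1 : Matrix (Fin n) (Fin n) ℂ)
        = Q * (A - μ • (1 : Matrix (Fin n) (Fin n) ℂ)) * P := by
      rw [hB, Matrix.mul_sub, Matrix.sub_mul]
      congr 1
      rw [Matrix.mul_smul, Matrix.smul_mul, Matrix.mul_one, hQP]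
    have hdq : Q.det * P.det = 1 := by rw [← Matrix.det_mul, hQP, Matrix.det_one]
    have : (Q * (A - μ • (1 : Matrix (Fin n) (Fin n) ℂ)) * P).det
        = (A - μ • (1 : Matrix (Fin n) (Fin n) ℂ)).det := by
      rw [Matrix.det_mul, Matrix.det_mul]
      calc Q.det * (A - μ • (1 : Matrix (Fin n) (Fin n) ℂ)).det * P.det
          = (A - μ • (1 : Matrix (Fin n) (Fin n) ℂ)).det * (Q.det * P.det) := by ring
        _ = (A - μ • (1 : Matrix (Fin n) (Fin n) ℂ)).det := by rw [hdq, mul_one]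
    rw [← this, ← hBA, hdetB]
  have hΛ : LinearMap.det (Lam A - μ • LinearMap.id)
      = ∏ p : SymIdx n, ((d (p : Fin n × Fin n).1 + d (p : Fin n × Fin n).2) / 2 - μ) := by
    rw [det_lam_conj A P Q hPQ hQP μ, ← hB, det_lam_lower B hBtri μ]
    apply Finset.prod_congr rfl
    intro p _
    simp only [hd]
    ring
  rw [hΛ, sq_prod_sym (fun i j => (d i + d j) / 2 - μ) (fun i j => by ring), hdetA]
  have hdp : ∏ i, ∏ j, ((lam i + lam j) / 2 - μ) = ∏ i, ∏ j, ((d i + d j) / 2 - μ) := by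
    rw [prod_prod_multiset, prod_prod_multiset, hmult]
  have hdiag : ∏ i, ((d i + d i) / 2 - μ) = ∏ i, (d i - μ) :=
    Finset.prod_congr rfl (fun i _ => by ring)
  rw [hdp, hdiag, mul_comm]
end Final

/-- If the characteristic polynomial of `A` factors as `∏ (X - λᵢ)`, then
for every `μ`, `(det(Λ_A - μ·Id))² = det(A - μ·I) · ∏ᵢ ∏ⱼ ((λᵢ + λⱼ)/2 - μ)`. -/
theorem det_lam_sub_smul_id_sq {n : ℕ} (A : Matrix (Fin n) (Fin n) ℂ) (lam : Fin n → ℂ)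
    (hA : A.charpoly = ∏ i, (X - C (lam i))) (μ : ℂ) :
    (LinearMap.det (Lam A - μ • LinearMap.id)) ^ 2 =
      (A - μ • (1 : Matrix (Fin n) (Fin n) ℂ)).det *
        ∏ i, ∏ j, ((lam i + lam j) / 2 - μ) := by
  exact det_lam_sub_smul_id_sq' A lam hA μ
end

section
/- Let A be a 2×2 real matrix with σ₁ = tr A and σ₂ = det A, and let Λ_A be the induced linear endomorphism of the 3-dimensional space of symmetric 2×2 real matrices. Then the (monic) characteristic polynomial of Λ_A equals X³ − (3σ₁/2)·X² + ((σ₁² + 2σ₂)/2)·X − (σ₁σ₂)/2. -/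
/-!
In the coordinates `(W₀₀, W₁₁, W₀₁)` the operator `Λ_A` has matrix
`[[a, 0, c], [0, d, b], [b/2, c/2, (a+d)/2]]` for `A = [[a, b], [c, d]]`. Expanding its
characteristic determinant along the first row gives `(X-a)(X-d)(X-t) - (bc/2)(2X-a-d)`, and
`2X-a-d = 2(X-t)` for `t = tr A / 2`, so `χ_{Λ_A} = χ_A · (X - tr A / 2)`: the eigenvalues of `Λ_A`
are `λ₁, λ₂, (λ₁+λ₂)/2`. Expanding `χ_A = X² - tr A · X + det A` gives the coefficients.
-/

open Matrix Polynomial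

namespace symMat

variable {R : Type*} [CommRing R]

theorem apply_one_zero (W : symMat 2 R) : W.1 1 0 = W.1 0 1 :=
  congrFun (congrFun W.2 0) 1

def finTwoEquiv : symMat 2 R ≃ₗ[R] (Fin 3 → R) where
  toFun W := ![W.1 0 0, W.1 1 1, W.1 0 1]
  invFun v := ⟨!![v 0, v 2; v 2, v 1], by ext i j; fin_cases i <;> fin_cases j <;> rfl⟩
  map_add' W W' := by ext i; fin_cases i <;> rfl
  map_smul' c W := by ext i; fin_cases i <;> rfl
  left_inv W := by ext i j; fin_cases i <;> fin_cases j <;> simp [apply_one_zero]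
  right_inv v := by ext i; fin_cases i <;> rfl

noncomputable def finTwoBasis : Module.Basis (Fin 3) R (symMat 2 R) :=
  .ofEquivFun finTwoEquiv

end symMat

section FinTwo

variable {𝕜 : Type*} [Field 𝕜] [NeZero (2 : 𝕜)]

theorem Polynomial.C_inv_two_mul_two : C (2⁻¹ : 𝕜) * 2 = 1 := by
  rw [← map_ofNat C 2, ← C_mul, inv_mul_cancel₀ two_ne_zero, C_1]

theorem toMatrix_Lam_finTwo (A : Matrix (Fin 2) (Fin 2) 𝕜) :
    LinearMap.toMatrix symMat.finTwoBasis symMat.finTwoBasis (Lam A) =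
      !![A 0 0, 0, A 1 0;
         0, A 1 1, A 0 1;
         A 0 1 / 2, A 1 0 / 2, A.trace / 2] := by
  ext i j
  fin_cases i <;> fin_cases j <;>
    simp [LinearMap.toMatrix_apply, symMat.finTwoBasis, symMat.finTwoEquiv, Lam, mul_apply,
      vecMul, dotProduct, Fin.sum_univ_two, trace_fin_two, ← div_eq_inv_mul, add_div]

theorem charpoly_Lam_finTwo (A : Matrix (Fin 2) (Fin 2) 𝕜) :
    (Lam A).charpoly = A.charpoly * (X - C (A.trace / 2)) := by
  rw [← LinearMap.charpoly_toMatrix _ symMat.finTwoBasis, toMatrix_Lam_finTwo,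
    charpoly_fin_two, Matrix.charpoly, det_fin_three]
  simp only [charmatrix_apply_eq, charmatrix_apply_ne, ne_eq, Fin.reduceEq, not_false_eq_true,
    of_apply, cons_val', cons_val_zero, cons_val_one, cons_val, cons_val_fin_one, det_fin_two,
    trace_fin_two, div_eq_mul_inv, C_mul, map_add, map_sub, map_zero, neg_zero, mul_zero,
    zero_mul, sub_zero, add_zero]
  linear_combination (-C (A 0 1) * C (A 1 0) * X) * C_inv_two_mul_two (𝕜 := 𝕜)

end FinTwo

/-- For a `2 × 2` real matrix `A` with `σ₁ = tr A`, `σ₂ = det A`, the monic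
characteristic polynomial of `Λ_A` equals `X³ − (3σ₁/2)X² + ((σ₁² + 2σ₂)/2)X − σ₁σ₂/2`. -/
theorem charpoly_lam_two (A : Matrix (Fin 2) (Fin 2) ℝ) :
    LinearMap.charpoly (Lam A) =
      X ^ 3 - C (3 * A.trace / 2) * X ^ 2
        + C ((A.trace ^ 2 + 2 * A.det) / 2) * X - C (A.trace * A.det / 2) := by
  rw [charpoly_Lam_finTwo, charpoly_fin_two]
  simp only [div_eq_mul_inv, C_mul, C_add, C_pow, map_ofNat]
  linear_combination (C A.trace * X ^ 2 - C A.det * X) * C_inv_two_mul_two (𝕜 := ℝ)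
end

section
/- Let A be a 2×2 real matrix with σ₁ = tr A and σ₂ = det A, and suppose σ₁ ≠ 0 and σ₂ ≠ 0. Then the linear endomorphism Λ_A of the space of symmetric 2×2 real matrices is bijective and its inverse is given by Λ_A⁻¹ = ( 2·Λ_A² − 3σ₁·Λ_A + (σ₁² + 2σ₂)·Id ) / (σ₁ σ₂). -/
open Matrix Polynomial

/-!
Write `Λ_A = (L + R) / 2`, where `L` is left multiplication by `Aᵀ` and `R` is right
multiplication by `A` on all `2 × 2` matrices. The operators `L` and `R` commute, and by
Cayley–Hamilton both are annihilated by `x² - σ₁ x + σ₂`. So `L + R`, whose eigenvalues are the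
pairwise sums `2λ₁, 2λ₂, λ₁ + λ₂ = σ₁`, is annihilated by `(x² - 2σ₁ x + 4σ₂)(x - σ₁)`; rescaled,
`2Λ_A³ - 3σ₁Λ_A² + (σ₁² + 2σ₂)Λ_A = σ₁σ₂`. This identity survives restriction to the symmetric
matrices (which `L` and `R` separately do not preserve) and exhibits the inverse of `Λ_A`.
-/

open scoped IsMulCommutative in
theorem Commute.add_cubic_eq_of_quadratic {K R : Type*} [CommRing K] [Ring R] [Algebra K R]
    {l r : R} (hlr : Commute l r) {s p : K}
    (hl : l ^ 2 - s • l + p • 1 = 0) (hr : r ^ 2 - s • r + p • 1 = 0) :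
    (l + r) ^ 3 - (3 * s) • (l + r) ^ 2 + (2 * s ^ 2 + 4 * p) • (l + r) = (4 * s * p) • 1 := by
  have : IsMulCommutative (Algebra.adjoin K {l, r}) := Algebra.isMulCommutative_adjoin K (by
    rintro a (rfl | rfl) b (rfl | rfl) <;> first | rfl | exact hlr.eq | exact hlr.eq.symm)
  let l' : Algebra.adjoin K {l, r} := ⟨l, Algebra.subset_adjoin (by simp)⟩
  let r' : Algebra.adjoin K {l, r} := ⟨r, Algebra.subset_adjoin (by simp)⟩
  have hl' : l' ^ 2 - algebraMap K _ s * l' + algebraMap K _ p = 0 := by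
    ext; simpa [Algebra.smul_def] using hl
  have hr' : r' ^ 2 - algebraMap K _ s * r' + algebraMap K _ p = 0 := by
    ext; simpa [Algebra.smul_def] using hr
  have key : (l' + r') ^ 3 - algebraMap K _ (3 * s) * (l' + r') ^ 2
      + algebraMap K _ (2 * s ^ 2 + 4 * p) * (l' + r') = algebraMap K _ (4 * s * p) := by
    simp only [map_add, map_mul, map_pow, map_ofNat]
    linear_combination (l' + 3 * r' - 2 * algebraMap K _ s) * hl'
      + (r' + 3 * l' - 2 * algebraMap K _ s) * hr'
  simpa [Algebra.smul_def] using congrArg Subtype.val key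

theorem Matrix.sq_sub_trace_smul_add_det_smul_eq_zero {R : Type*} [CommRing R]
    (A : Matrix (Fin 2) (Fin 2) R) : A ^ 2 - A.trace • A + A.det • 1 = 0 := by
  nontriviality R
  simpa [charpoly_fin_two, Algebra.smul_def] using A.aeval_self_charpoly

section

variable {K A : Type*} [CommRing K] [Ring A] [Algebra K A] {a : A} {s p : K}

theorem LinearMap.mulLeft_sq_sub_smul_add_smul_eq_zero (h : a ^ 2 - s • a + p • 1 = 0) :
    mulLeft K a ^ 2 - s • mulLeft K a + p • 1 = 0 := by
  ext x
  simpa [pow_mulLeft, sub_mul, add_mul, smul_mul_assoc] using congrArg (· * x) h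

theorem LinearMap.mulRight_sq_sub_smul_add_smul_eq_zero (h : a ^ 2 - s • a + p • 1 = 0) :
    mulRight K a ^ 2 - s • mulRight K a + p • 1 = 0 := by
  ext x
  simpa [pow_mulRight, mul_sub, mul_add, mul_smul_comm] using congrArg (x * ·) h

end

section

variable {𝕜 : Type*} [Field 𝕜]

def lamMatrix {n : ℕ} (A : Matrix (Fin n) (Fin n) 𝕜) : Module.End 𝕜 (Matrix (Fin n) (Fin n) 𝕜) :=
  (2 : 𝕜)⁻¹ • (LinearMap.mulLeft 𝕜 Aᵀ + LinearMap.mulRight 𝕜 A)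

theorem coe_lam_apply {n : ℕ} (A : Matrix (Fin n) (Fin n) 𝕜) (W : symMat n 𝕜) :
    (Lam A W : Matrix (Fin n) (Fin n) 𝕜) = lamMatrix A W :=
  rfl

theorem lamMatrix_cubic [NeZero (2 : 𝕜)] (A : Matrix (Fin 2) (Fin 2) 𝕜) :
    ((2 : 𝕜) • (lamMatrix A * lamMatrix A) - (3 * A.trace) • lamMatrix A
      + (A.trace ^ 2 + 2 * A.det) • 1) * lamMatrix A = (A.trace * A.det) • 1 := by
  have hl : LinearMap.mulLeft 𝕜 Aᵀ ^ 2 - A.trace • LinearMap.mulLeft 𝕜 Aᵀ + A.det • 1 = 0 := by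
    rw [← trace_transpose, ← det_transpose]
    exact LinearMap.mulLeft_sq_sub_smul_add_smul_eq_zero Aᵀ.sq_sub_trace_smul_add_det_smul_eq_zero
  have hr : LinearMap.mulRight 𝕜 A ^ 2 - A.trace • LinearMap.mulRight 𝕜 A + A.det • 1 = 0 :=
    LinearMap.mulRight_sq_sub_smul_add_smul_eq_zero A.sq_sub_trace_smul_add_det_smul_eq_zero
  have key := (LinearMap.commute_mulLeft_right Aᵀ A).add_cubic_eq_of_quadratic hl hr
  simp only [add_mul, sub_mul, smul_mul_assoc, one_mul, ← pow_two, ← pow_succ, Nat.reduceAdd]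
  simp only [lamMatrix, _root_.smul_pow]
  linear_combination (norm := match_scalars) ((2 : 𝕜)⁻¹ ^ 2) • key
  all_goals field_simp
  all_goals ring

theorem lam_cubic [NeZero (2 : 𝕜)] (A : Matrix (Fin 2) (Fin 2) 𝕜) :
    ((2 : 𝕜) • (Lam A * Lam A) - (3 * A.trace) • Lam A + (A.trace ^ 2 + 2 * A.det) • 1) * Lam A
      = (A.trace * A.det) • 1 := by
  ext W : 1
  apply Subtype.ext
  simpa [coe_lam_apply] using congr($(lamMatrix_cubic A) W)

end

/-- For a `2 × 2` real matrix `A` with `σ₁ = tr A ≠ 0` and `σ₂ = det A ≠ 0`,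
the operator `Λ_A` is bijective, with inverse
`Λ_A⁻¹ = (2Λ_A² − 3σ₁Λ_A + (σ₁² + 2σ₂)·Id)/(σ₁σ₂)`. -/
theorem lam_inverse_two (A : Matrix (Fin 2) (Fin 2) ℝ)
    (h1 : A.trace ≠ 0) (h2 : A.det ≠ 0) :
    Function.Bijective (Lam A) ∧
      ((A.trace * A.det)⁻¹ •
          ((2 : ℝ) • ((Lam A : Module.End ℝ (symMat 2 ℝ)) * Lam A)
            - (3 * A.trace) • (Lam A : Module.End ℝ (symMat 2 ℝ))
            + (A.trace ^ 2 + 2 * A.det) • (1 : Module.End ℝ (symMat 2 ℝ)))) * Lam A = 1 ∧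
      (Lam A : Module.End ℝ (symMat 2 ℝ)) *
        ((A.trace * A.det)⁻¹ •
          ((2 : ℝ) • ((Lam A : Module.End ℝ (symMat 2 ℝ)) * Lam A)
            - (3 * A.trace) • (Lam A : Module.End ℝ (symMat 2 ℝ))
            + (A.trace ^ 2 + 2 * A.det) • (1 : Module.End ℝ (symMat 2 ℝ)))) = 1 := by
  have hleft : ((A.trace * A.det)⁻¹ • ((2 : ℝ) • (Lam A * Lam A) - (3 * A.trace) • Lam A
      + (A.trace ^ 2 + 2 * A.det) • 1)) * Lam A = 1 := by
    rw [smul_mul_assoc, lam_cubic A, smul_smul, inv_mul_cancel₀ (mul_ne_zero h1 h2), one_smul]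
  exact ⟨(Module.End.isUnit_iff _).mp (.of_mul_eq_one_right _ hleft), hleft,
    mul_eq_one_comm.mp hleft⟩
end
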